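/- Let p be an odd prime, K = Q(ζ_p), p = (1-ζ_p), and k a positive multiple of p-1 with k ≥ p-1. If x is a unit of ℤ[ζ_p] with x ≡ 1 (mod p^k), then x ≡ 1 (mod p^{k+1}). -/

import Mathlib

/-!
Write `π = 1 - ζ` and `x = 1 + π ^ k * y`. Every `σ ∈ Gal(K/ℚ)` acts trivially on `𝓞 K / π`
(which is generated by `ζ ≡ 1`) and sends `π` to `π * u` with `u` a unit. As `𝓞 K / π ≅ 𝔽_p` and
`p - 1 ∣ k`, we get `u ^ k ≡ 1 (mod π)`, hence `σ x ≡ x (mod π ^ (k + 1))`. So the norm satisfies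
`N(x) = ∏ σ x ≡ x ^ (p - 1) ≡ 1 + (p - 1) π ^ k y ≡ 2 - x (mod π ^ (k + 1))`, using `π ∣ p`.
Since `N(x) = ±1` and `π ∤ 2`, we must have `N(x) = 1`, which is the claim.
-/

open NumberField Ideal

theorem one_add_pow_of_sq_eq_zero {R : Type*} [CommRing R] {ε : R} (h : ε ^ 2 = 0) (n : ℕ) :
    (1 + ε) ^ n = 1 + n * ε := by
  induction n with
  | zero => simp
  | succ n ih => rw [pow_succ, ih]; push_cast; linear_combination (n : R) * h

theorem Ideal.pow_sub_one_add_mul_sub_one_mem_sq {R : Type*} [CommRing R] {J : Ideal R} {x : R}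
    (hx : x - 1 ∈ J) (n : ℕ) : x ^ n - (1 + n * (x - 1)) ∈ J ^ 2 := by
  have hsq : Ideal.Quotient.mk (J ^ 2) (x - 1) ^ 2 = 0 := by
    rw [← map_pow, Ideal.Quotient.eq_zero_iff_mem]
    exact pow_mem_pow hx 2
  rw [← Ideal.Quotient.eq, map_pow, map_add, map_one, map_mul, map_natCast,
    ← one_add_pow_of_sq_eq_zero hsq, ← map_one (Ideal.Quotient.mk _), ← map_add, add_sub_cancel]

theorem Ideal.pow_card_sub_one_sub_one_mem {R : Type*} [CommRing R] {I : Ideal R} [I.IsMaximal]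
    [Finite (R ⧸ I)] {a : R} (ha : a ∉ I) : a ^ (Nat.card (R ⧸ I) - 1) - 1 ∈ I := by
  let := Ideal.Quotient.field I
  let := Fintype.ofFinite (R ⧸ I)
  rw [← Ideal.Quotient.eq_zero_iff_mem, map_sub, map_pow, map_one, Nat.card_eq_fintype_card,
    FiniteField.pow_card_sub_one_eq_one _ (by rwa [Ne, Ideal.Quotient.eq_zero_iff_mem]), sub_self]

theorem Ideal.map_sub_self_mem_of_adjoin_eq_top {A : Type*} [CommRing A] {ζ : A}
    (hζ : Algebra.adjoin ℤ {ζ} = ⊤) (I : Ideal A) (σ : A →+* A) (h : σ ζ - ζ ∈ I) (z : A) :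
    σ z - z ∈ I := by
  have := AlgHom.ext_of_adjoin_eq_top hζ (φ₁ := ((Ideal.Quotient.mk I).comp σ).toIntAlgHom)
    (φ₂ := (Ideal.Quotient.mk I).toIntAlgHom) (by simpa [Ideal.Quotient.eq] using h)
  simpa [Ideal.Quotient.eq] using congr($this z)

theorem NumberField.algebraMap_norm_int_eq_prod_smul {K : Type*} [Field K] [NumberField K]
    [IsGalois ℚ K] (x : 𝓞 K) :
    algebraMap ℤ (𝓞 K) (Algebra.norm ℤ x) = ∏ σ : Gal(K/ℚ), σ • x := by
  apply RingOfIntegers.coe_injective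
  rw [eq_intCast, map_intCast, ← Rat.cast_intCast, Algebra.coe_norm_int,
    ← eq_ratCast (algebraMap ℚ K), Algebra.norm_eq_prod_automorphisms, map_prod]
  rfl

namespace IsPrimitiveRoot

variable {p : ℕ} [hp : Fact p.Prime] {K : Type*} [Field K] [NumberField K]
  [IsCyclotomicExtension {p} ℚ K] {ζ : 𝓞 K} (hζ : IsPrimitiveRoot ζ p)
include hζ

theorem prime_one_sub : Prime (1 - ζ) := by
  rw [← neg_sub]
  exact (hζ.map_of_injective RingOfIntegers.coe_injective).zeta_sub_one_prime'.neg

omit [NumberField K] [IsCyclotomicExtension {p} ℚ K] in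
theorem span_one_sub_eq_span_toInteger_sub_one :
    span {1 - ζ} = span {(hζ.map_of_injective RingOfIntegers.coe_injective).toInteger - 1} := by
  rw [← neg_sub, span_singleton_neg]
  rfl

theorem isMaximal_span_one_sub : (span {1 - ζ}).IsMaximal :=
  ((span_singleton_prime hζ.prime_one_sub.ne_zero).mpr hζ.prime_one_sub).isMaximal
    (by simpa using hζ.prime_one_sub.ne_zero)

theorem natCard_quotient_span_one_sub : Nat.card (𝓞 K ⧸ span {1 - ζ}) = p := by
  have : IsCyclotomicExtension {p ^ (0 + 1)} ℚ K := by simpa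
  rw [← Submodule.cardQuot_apply, ← absNorm_apply, hζ.span_one_sub_eq_span_toInteger_sub_one]
  exact IsCyclotomicExtension.Rat.absNorm_span_zeta_sub_one p 0
    (by simpa using hζ.map_of_injective RingOfIntegers.coe_injective)

theorem natCast_mem_span_one_sub : (p : 𝓞 K) ∈ span {1 - ζ} := by
  rw [hζ.span_one_sub_eq_span_toInteger_sub_one, mem_span_singleton]
  exact (hζ.map_of_injective RingOfIntegers.coe_injective).toInteger_sub_one_dvd_prime'

theorem two_notMem_span_one_sub (hodd : p ≠ 2) : (2 : 𝓞 K) ∉ span {1 - ζ} := by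
  rw [hζ.span_one_sub_eq_span_toInteger_sub_one]
  exact IsCyclotomicExtension.Rat.two_not_mem_span_zeta_sub_one' p _
    (lt_of_le_of_ne hp.out.two_le hodd.symm)

theorem unit_pow_sub_one_mem_span_one_sub {k : ℕ} (hk : p - 1 ∣ k) (u : (𝓞 K)ˣ) :
    (u : 𝓞 K) ^ k - 1 ∈ span {1 - ζ} := by
  have := hζ.isMaximal_span_one_sub
  have : Finite (𝓞 K ⧸ span {1 - ζ}) :=
    Nat.finite_of_card_ne_zero (hζ.natCard_quotient_span_one_sub ▸ hp.out.ne_zero)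
  have hfermat := pow_card_sub_one_sub_one_mem (notMem_of_isUnit (span {1 - ζ}) u.isUnit)
  rw [hζ.natCard_quotient_span_one_sub, mem_span_singleton] at hfermat
  obtain ⟨m, rfl⟩ := hk
  rw [mem_span_singleton, pow_mul]
  simpa only [one_pow] using hfermat.trans (sub_dvd_pow_sub_pow _ 1 m)

theorem associated_one_sub_smul (σ : Gal(K/ℚ)) : Associated (1 - ζ) (σ • (1 - ζ)) := by
  rw [smul_sub, smul_one,
    IsCyclotomicExtension.Rat.galEquivZMod_smul_of_pow_eq p K σ hζ.pow_eq_one,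
    ← neg_sub ζ, ← neg_sub (ζ ^ _)]
  exact (hζ.associated_sub_one_pow_sub_one_of_coprime (ZMod.val_coe_unit_coprime _)).neg_neg

theorem smul_sub_self_mem_span_one_sub (σ : Gal(K/ℚ)) (z : 𝓞 K) : σ • z - z ∈ span {1 - ζ} := by
  refine map_sub_self_mem_of_adjoin_eq_top (IsCyclotomicExtension.adjoin_primitive_root_eq_top hζ)
    _ (MulSemiringAction.toRingHom _ _ σ) ?_ z
  obtain ⟨u, hu⟩ := hζ.associated_one_sub_smul σ
  rw [smul_sub, smul_one] at hu
  rw [MulSemiringAction.toRingHom_apply, mem_span_singleton]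
  exact ⟨1 - u, by linear_combination hu⟩

theorem smul_sub_self_mem_span_pow_succ {k : ℕ} (hk : p - 1 ∣ k) {x : 𝓞 K}
    (hx : x - 1 ∈ span {1 - ζ} ^ k) (σ : Gal(K/ℚ)) : σ • x - x ∈ span {1 - ζ} ^ (k + 1) := by
  rw [span_singleton_pow, mem_span_singleton] at hx ⊢
  obtain ⟨y, hy⟩ := hx
  obtain ⟨u, hu⟩ := hζ.associated_one_sub_smul σ
  have hu_pow := mem_span_singleton.mp (hζ.unit_pow_sub_one_mem_span_one_sub hk u)
  have hy_fix := mem_span_singleton.mp (hζ.smul_sub_self_mem_span_one_sub σ y)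
  have : σ • x - x = (1 - ζ) ^ k * ((u ^ k - 1) * σ • y + (σ • y - y)) := by
    rw [← sub_sub_sub_cancel_right _ _ 1, ← smul_one σ, ← smul_sub, smul_one, hy, smul_mul',
      smul_pow', ← hu, mul_pow]
    ring
  rw [this, pow_succ]
  exact mul_dvd_mul_left _ (dvd_add (hu_pow.mul_right _) hy_fix)

theorem algebraMap_norm_sub_two_sub_mem {k : ℕ} (hk0 : 0 < k) (hk : p - 1 ∣ k) {x : 𝓞 K}
    (hx : x - 1 ∈ span {1 - ζ} ^ k) :
    algebraMap ℤ (𝓞 K) (Algebra.norm ℤ x) - (2 - x) ∈ span {1 - ζ} ^ (k + 1) := by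
  have := IsCyclotomicExtension.isGalois {p} ℚ K
  refine Ideal.Quotient.eq.mp ?_
  rw [algebraMap_norm_int_eq_prod_smul]
  calc Ideal.Quotient.mk _ (∏ σ : Gal(K/ℚ), σ • x)
      = Ideal.Quotient.mk _ x ^ (p - 1) := by
        rw [map_prod, Finset.prod_congr rfl fun σ _ ↦
            Ideal.Quotient.eq.mpr (hζ.smul_sub_self_mem_span_pow_succ hk hx σ),
          Finset.prod_const, Finset.card_univ, ← Nat.card_eq_fintype_card,
          IsGalois.card_aut_eq_finrank, IsCyclotomicExtension.Rat.finrank p K, Nat.totient_prime hp.out]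
    _ = Ideal.Quotient.mk _ (1 + (p - 1 : ℕ) * (x - 1)) := by
        rw [← map_pow, Ideal.Quotient.eq]
        refine pow_le_pow_right (show k + 1 ≤ k * 2 by omega) ?_
        rw [pow_mul]
        exact pow_sub_one_add_mul_sub_one_mem_sq hx _
    _ = Ideal.Quotient.mk _ (2 - x) := by
        rw [Ideal.Quotient.eq, Nat.cast_pred hp.out.pos, pow_succ']
        convert mul_mem_mul hζ.natCast_mem_span_one_sub hx using 1
        ring

end IsPrimitiveRoot

/-- Let `p` be an odd prime, `K = ℚ(ζ_p)`, `𝔭 = (1 - ζ_p)`, and `k` a positive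
multiple of `p - 1` (so `k ≥ p - 1`).  If `x` is a unit of `ℤ[ζ_p]` with
`x ≡ 1 (mod 𝔭^k)`, then `x ≡ 1 (mod 𝔭^(k+1))`. -/
theorem stmt7 (p : ℕ+) (hp : (p : ℕ).Prime) (hodd : (p : ℕ) ≠ 2)
    (K : Type*) [Field K] [NumberField K] [IsCyclotomicExtension {(p : ℕ)} ℚ K]
    (ζ : 𝓞 K) (hζ : IsPrimitiveRoot ζ p)
    (k : ℕ) (hk0 : 0 < k) (hk : ((p : ℕ) - 1) ∣ k)
    (x : (𝓞 K)ˣ) (hx : (x : 𝓞 K) - 1 ∈ (Ideal.span {1 - ζ}) ^ k) :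
    (x : 𝓞 K) - 1 ∈ (Ideal.span {1 - ζ}) ^ (k + 1) := by
  have := Fact.mk hp
  have hnorm := hζ.algebraMap_norm_sub_two_sub_mem hk0 hk hx
  rcases Int.isUnit_iff.mp (x.isUnit.map (Algebra.norm ℤ)) with hN | hN
  · convert hnorm using 1
    rw [hN, map_one]
    ring
  · refine absurd ?_ (hζ.two_notMem_span_one_sub hodd)
    have hx3 : (x : 𝓞 K) - 3 ∈ span {1 - ζ} := by
      refine pow_le_self (Nat.succ_ne_zero k) ?_
      convert hnorm using 1
      rw [hN, map_neg, map_one]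
      ring
    convert sub_mem (pow_le_self hk0.ne' hx) hx3 using 1
    ring
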